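/- (Existence of the center of axial asymmetry for polygons.) For every n ≥ 3 there exist n-gon centers X and Y, both defined on the family of all labellings v : Fin n → ℂ, such that for every labelling v: (a) X(v) equals the centroid of v if and only if Fix(v) consists of exactly one point; and (b) the three points centroid(v), X(v), Y(v) are pairwise distinct and not collinear if and only if Fix(v) = ℂ (equivalently, the only symmetry of the n-gon v is the identity). -/

import Mathlib

noncomputable section

/-- A similarity of the plane: a bijection multiplying all distances by a fixed
positive ratio. -/
def IsSimilarity (f : ℂ → ℂ) : Prop :=
  Function.Bijective f ∧ ∃ r : ℝ, 0 < r ∧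
    ∀ z w : ℂ, ‖f z - f w‖ = r * ‖z - w‖

/-- An isometry of the plane: a similarity with ratio 1. -/
def IsPlaneIsometry (f : ℂ → ℂ) : Prop :=
  Function.Bijective f ∧ ∀ z w : ℂ, ‖f z - f w‖ = ‖z - w‖

/-- `α` is an element of the dihedral subgroup of the permutations of `Fin n`:
`i ↦ i + k` or `i ↦ k - i` (mod `n`). -/
def IsDihedral (n : ℕ) (α : Fin n → Fin n) : Prop :=
  (∃ k : Fin n, ∀ i, α i = i + k) ∨ (∃ k : Fin n, ∀ i, α i = k - i)

/-- `T` is a symmetry of the `n`-gon labelled by `v`: a plane isometry with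
`T ∘ v = v ∘ α` for some dihedral relabelling `α`. -/
def IsPolygonSymmetry (n : ℕ) (v : Fin n → ℂ) (T : ℂ → ℂ) : Prop :=
  IsPlaneIsometry T ∧ ∃ α : Fin n → Fin n, IsDihedral n α ∧ T ∘ v = v ∘ α

/-- The set of points fixed by every symmetry of the `n`-gon labelled by `v`. -/
def FixPolygon (n : ℕ) (v : Fin n → ℂ) : Set ℂ :=
  {x | ∀ T : ℂ → ℂ, IsPolygonSymmetry n v T → T x = x}

/-!
The centers are built by transport of structure. Choose a representative in each class of
`n`-gons modulo similarities and dihedral relabellings, choose suitable points of `Fix` on each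
representative, and carry them to an arbitrary `n`-gon along a similarity that maps the
representative onto it. The result does not depend on that similarity: two of them differ by a
similarity `g` mapping the vertex family to a relabelling of itself, and such a `g` preserves the
sum of all pairwise vertex distances, so it is an isometry (or the polygon is a single point),
hence a symmetry, and fixes `Fix` pointwise.

On a representative `w`, both `X` and `Y` pick a point of `Fix w` other than the centroid when
there is one, and the centroid otherwise; when `Fix w` is the whole plane they pick the vertices
`c + 1` and `c + i` of a nondegenerate triangle over the centroid `c`.
-/

open Function

lemma Function.Bijective.image_eq_univ_iff {α β : Type*} {f : α → β} (hf : Bijective f)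
    {s : Set α} : f '' s = Set.univ ↔ s = Set.univ := by
  conv_lhs => rw [← Set.image_univ_of_surjective hf.2]
  exact (Set.image_injective.2 hf.1).eq_iff

lemma Function.Bijective.exists_image_eq_singleton_iff {α β : Type*} {f : α → β}
    (hf : Bijective f) {s : Set α} : (∃ y, f '' s = {y}) ↔ ∃ x, s = {x} := by
  refine ⟨fun ⟨y, hy⟩ => ?_, fun ⟨x, hx⟩ => ⟨f x, by rw [hx, Set.image_singleton]⟩⟩
  obtain ⟨x, rfl⟩ := hf.2 y
  exact ⟨x, (Set.image_injective.2 hf.1) (hy.trans (Set.image_singleton).symm)⟩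

lemma isSimilarity_id : IsSimilarity id :=
  ⟨bijective_id, 1, one_pos, fun z w => by simp⟩

lemma IsPlaneIsometry.isSimilarity {f : ℂ → ℂ} (hf : IsPlaneIsometry f) : IsSimilarity f :=
  ⟨hf.1, 1, one_pos, fun z w => by rw [hf.2, one_mul]⟩

namespace IsSimilarity

variable {f g : ℂ → ℂ}

lemma comp (hf : IsSimilarity f) (hg : IsSimilarity g) : IsSimilarity (f ∘ g) := by
  obtain ⟨hfb, r, hr, hfd⟩ := hf
  obtain ⟨hgb, s, hs, hgd⟩ := hg
  exact ⟨hfb.comp hgb, r * s, mul_pos hr hs, fun z w => by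
    simp only [comp_apply, hfd, hgd, mul_assoc]⟩

lemma invFun (hf : IsSimilarity f) : IsSimilarity (invFun f) := by
  obtain ⟨hfb, r, hr, hfd⟩ := hf
  have hright : RightInverse (Function.invFun f) f := rightInverse_invFun hfb.2
  refine ⟨bijective_iff_has_inverse.2 ⟨f, hright, leftInverse_invFun hfb.1⟩, r⁻¹, inv_pos.2 hr,
    fun z w => ?_⟩
  rw [eq_inv_mul_iff_mul_eq₀ hr.ne', ← hfd, hright z, hright w]

lemma exists_affineMap (hf : IsSimilarity f) : ∃ e : ℂ →ᵃ[ℝ] ℂ, ⇑e = f := by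
  obtain ⟨-, r, hr, hfd⟩ := hf
  have hiso : Isometry fun z => r⁻¹ • f z := Isometry.of_dist_eq fun z w => by
    rw [dist_eq_norm, dist_eq_norm, ← smul_sub, norm_smul, hfd,
      Real.norm_of_nonneg (inv_nonneg.2 hr.le), inv_mul_cancel_left₀ hr.ne']
  refine ⟨r • hiso.affineIsometryOfStrictConvexSpace.toAffineMap, funext fun z => ?_⟩
  simp [hr.ne']

lemma isPlaneIsometry_of_comp_eq {ι : Type*} [Fintype ι] {w : ι → ℂ} {γ : ι → ι}
    (hg : IsSimilarity g) (hγ : Bijective γ) (hw : ∃ i j, w i ≠ w j) (h : g ∘ w = w ∘ γ) : IsPlaneIsometry g := by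
  obtain ⟨hgb, r, hr, hgd⟩ := hg
  obtain ⟨i, j, hij⟩ := hw
  set S := ∑ p : ι × ι, ‖w p.1 - w p.2‖
  have hS : 0 < S := (norm_pos_iff.2 (sub_ne_zero.2 hij)).trans_le
    (Finset.single_le_sum (f := fun p : ι × ι => ‖w p.1 - w p.2‖)
      (fun _ _ => norm_nonneg _) (Finset.mem_univ (i, j)))
  have hrS : r * S = S := calc
    r * S = ∑ p : ι × ι, ‖g (w p.1) - g (w p.2)‖ := by simp only [S, Finset.mul_sum, hgd]
    _ = ∑ p : ι × ι, ‖w (γ p.1) - w (γ p.2)‖ := by simp only [← comp_apply (f := g), h]; rfl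
    _ = S := (hγ.prodMap hγ).sum_comp (fun p : ι × ι => ‖w p.1 - w p.2‖)
  have hr1 : r = 1 := by nlinarith
  exact ⟨hgb, fun z z' => by rw [hgd, hr1, one_mul]⟩

end IsSimilarity

namespace IsDihedral

variable {n : ℕ} [NeZero n] {α β : Fin n → Fin n}

lemma id : IsDihedral n id := Or.inl ⟨0, fun i => by simp⟩

lemma bijective (h : IsDihedral n α) : Bijective α := by
  rcases h with ⟨k, hk⟩ | ⟨k, hk⟩
  · rw [funext hk]; exact (Equiv.addRight k).bijective
  · rw [funext hk]; exact (Equiv.subLeft k).bijective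

lemma comp (hα : IsDihedral n α) (hβ : IsDihedral n β) : IsDihedral n (α ∘ β) := by
  rcases hα with ⟨k, hk⟩ | ⟨k, hk⟩ <;> rcases hβ with ⟨l, hl⟩ | ⟨l, hl⟩
  · exact Or.inl ⟨l + k, fun i => by simp [hk, hl, add_assoc]⟩
  · exact Or.inr ⟨l + k, fun i => by simp [hk, hl]; abel⟩
  · exact Or.inr ⟨k - l, fun i => by simp [hk, hl]; abel⟩
  · exact Or.inl ⟨k - l, fun i => by simp [hk, hl]; abel⟩

lemma exists_inverse (h : IsDihedral n α) :
    ∃ α' : Fin n → Fin n, IsDihedral n α' ∧ LeftInverse α' α ∧ RightInverse α' α := by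
  rcases h with ⟨k, hk⟩ | ⟨k, hk⟩
  · exact ⟨fun i => i + -k, Or.inl ⟨-k, fun i => rfl⟩, fun i => by simp [hk],
      fun i => by simp [hk]⟩
  · exact ⟨fun i => k - i, Or.inr ⟨k, fun i => rfl⟩, fun i => by simp [hk],
      fun i => by simp [hk]⟩

end IsDihedral

lemma not_collinear_add_one_add_I (c : ℂ) : ¬ Collinear ℝ ({c, c + 1, c + Complex.I} : Set ℂ) := by
  rw [collinear_iff_of_mem (Set.mem_insert c _)]
  rintro ⟨d, hd⟩
  obtain ⟨s, hs⟩ := hd (c + 1) (by simp)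
  obtain ⟨t, ht⟩ := hd (c + Complex.I) (by simp)
  rw [vadd_eq_add, add_comm, add_left_inj] at hs ht
  have hs_re := congrArg Complex.re hs
  have hs_im := congrArg Complex.im hs
  have ht_re := congrArg Complex.re ht
  have ht_im := congrArg Complex.im ht
  simp only [Complex.one_re, Complex.one_im, Complex.I_re, Complex.I_im, Complex.real_smul,
    Complex.mul_re, Complex.mul_im, Complex.ofReal_re, Complex.ofReal_im, zero_mul,
    sub_zero, add_zero] at hs_re hs_im ht_re ht_im
  -- `1 = s d` and `i = t d` would make `1` and `i` real multiples of each other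
  have : (1 : ℝ) = 0 := by linear_combination hs_re + s * d.re * ht_im - t * d.re * hs_im
  exact one_ne_zero this

lemma IsSimilarity.not_collinear {f : ℂ → ℂ} (hf : IsSimilarity f) (c : ℂ) :
    ¬ Collinear ℝ ({f c, f (c + 1), f (c + Complex.I)} : Set ℂ) := by
  obtain ⟨e, rfl⟩ := hf.exists_affineMap
  rw [← affineIndependent_iff_not_collinear_set]
  convert (affineIndependent_iff_not_collinear_set.2 (not_collinear_add_one_add_I c)).map' e
    hf.1.1 using 1
  ext i; fin_cases i <;> rfl

def polygonCentroid (n : ℕ) (v : Fin n → ℂ) : ℂ := (∑ i, v i) / n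

lemma polygonCentroid_comp {n : ℕ} (v : Fin n → ℂ) {α : Fin n → Fin n} (hα : Bijective α) :
    polygonCentroid n (v ∘ α) = polygonCentroid n v := by
  simp only [polygonCentroid, comp_apply, hα.sum_comp v]

lemma IsSimilarity.map_polygonCentroid {n : ℕ} [NeZero n] {f : ℂ → ℂ} (hf : IsSimilarity f)
    (v : Fin n → ℂ) : polygonCentroid n (f ∘ v) = f (polygonCentroid n v) := by
  obtain ⟨e, rfl⟩ := hf.exists_affineMap
  have hn : (n : ℂ) ≠ 0 := Nat.cast_ne_zero.2 (NeZero.ne n)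
  have hdiv : ∀ z : ℂ, z / n = (n : ℝ)⁻¹ • z := fun z => by
    rw [Complex.real_smul]; push_cast; ring
  rw [AffineMap.decomp e]
  simp only [polygonCentroid, Pi.add_apply, comp_apply, Finset.sum_add_distrib,
    Finset.sum_const, Finset.card_univ, Fintype.card_fin, nsmul_eq_mul, add_div]
  rw [hdiv, hdiv, hdiv, map_smul, map_sum, ← hdiv (n * e 0), mul_div_cancel_left₀ _ hn]

section FixPolygon

variable {n : ℕ} [NeZero n]

lemma polygonCentroid_mem_fixPolygon (v : Fin n → ℂ) : polygonCentroid n v ∈ FixPolygon n v := by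
  rintro T ⟨hT, α, hα, hTv⟩
  rw [← hT.isSimilarity.map_polygonCentroid, hTv, polygonCentroid_comp v hα.bijective]

lemma IsPolygonSymmetry.conj {v : Fin n → ℂ} {f T : ℂ → ℂ} {β : Fin n → Fin n}
    (hf : IsSimilarity f) (hβ : IsDihedral n β) (hT : IsPolygonSymmetry n (f ∘ v ∘ β) T) :
    IsPolygonSymmetry n v (Function.invFun f ∘ T ∘ f) := by
  obtain ⟨⟨hTb, hTd⟩, α, hα, hTv⟩ := hT
  obtain ⟨β', hβ', hleft, hright⟩ := hβ.exists_inverse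
  have hfg : RightInverse (Function.invFun f) f := rightInverse_invFun hf.1.2
  refine ⟨⟨hf.invFun.1.comp (hTb.comp hf.1), fun z w => ?_⟩, β ∘ α ∘ β', hβ.comp (hα.comp hβ'),
    funext fun i => ?_⟩
  · obtain ⟨-, r, hr, hfd⟩ := hf
    have := hfd (Function.invFun f (T (f z))) (Function.invFun f (T (f w)))
    rw [hfg, hfg, hTd, hfd] at this
    exact (mul_left_cancel₀ hr.ne' this).symm
  · have := congrFun hTv (β' i)
    simp only [comp_apply, hright i] at this
    simp only [comp_apply, this, leftInverse_invFun hf.1.1 _]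

lemma image_subset_fixPolygon_comp {v : Fin n → ℂ} {f : ℂ → ℂ} {β : Fin n → Fin n}
    (hf : IsSimilarity f) (hβ : IsDihedral n β) :
    f '' FixPolygon n v ⊆ FixPolygon n (f ∘ v ∘ β) := by
  rintro _ ⟨x, hx, rfl⟩ T hT
  have := congrArg f (hx _ (hT.conj hf hβ))
  rwa [comp_apply, comp_apply, rightInverse_invFun hf.1.2] at this

lemma fixPolygon_comp {v : Fin n → ℂ} {f : ℂ → ℂ} {β : Fin n → Fin n}
    (hf : IsSimilarity f) (hβ : IsDihedral n β) :
    FixPolygon n (f ∘ v ∘ β) = f '' FixPolygon n v := by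
  refine subset_antisymm (fun y hy => ?_) (image_subset_fixPolygon_comp hf hβ)
  obtain ⟨β', hβ', -, hright⟩ := hβ.exists_inverse
  have hv : Function.invFun f ∘ (f ∘ v ∘ β) ∘ β' = v := funext fun i => by
    simp [hright i, leftInverse_invFun hf.1.1 _]
  refine ⟨Function.invFun f y, ?_, rightInverse_invFun hf.1.2 y⟩
  rw [← hv]
  exact image_subset_fixPolygon_comp hf.invFun hβ' ⟨y, hy, rfl⟩

lemma fixPolygon_subset_of_forall_eq {w : Fin n → ℂ} {c : ℂ} (hw : ∀ i, w i = c) :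
    FixPolygon n w ⊆ {c} := by
  intro p hp
  have hT : IsPolygonSymmetry n w (fun z => 2 * c - z) := by
    refine ⟨⟨⟨fun a b h => ?_, fun a => ⟨2 * c - a, by ring⟩⟩, fun z z' => ?_⟩,
      id, IsDihedral.id, funext fun i => ?_⟩
    · linear_combination -h
    · rw [← norm_neg]; ring_nf
    · simp only [comp_apply, hw, id_eq]; ring
  have h2 : 2 * c - p = p := hp _ hT
  exact (by linear_combination -h2 / 2 : p = c)

end FixPolygon

section Transport

variable {n : ℕ} [NeZero n]

lemma IsSimilarity.apply_eq_of_mem_fixPolygon {w : Fin n → ℂ} {g : ℂ → ℂ} {γ : Fin n → Fin n}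
    (hg : IsSimilarity g) (hγ : IsDihedral n γ) (h : g ∘ w = w ∘ γ) {p : ℂ}
    (hp : p ∈ FixPolygon n w) : g p = p := by
  by_cases hw : ∃ i j, w i ≠ w j
  · exact hp g ⟨hg.isPlaneIsometry_of_comp_eq hγ.bijective hw h, γ, hγ, h⟩
  · simp only [not_exists, not_not] at hw
    obtain rfl : p = w 0 := fixPolygon_subset_of_forall_eq (fun i => hw i 0) hp
    exact (congrFun h 0).trans (hw _ 0)

lemma IsSimilarity.eqOn_fixPolygon {w : Fin n → ℂ} {f₁ f₂ : ℂ → ℂ} {β₁ β₂ : Fin n → Fin n}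
    (hf₁ : IsSimilarity f₁) (hf₂ : IsSimilarity f₂) (hβ₁ : IsDihedral n β₁)
    (hβ₂ : IsDihedral n β₂) (h : f₁ ∘ w ∘ β₁ = f₂ ∘ w ∘ β₂) :
    Set.EqOn f₁ f₂ (FixPolygon n w) := by
  intro p hp
  obtain ⟨β₁', hβ₁', -, hright⟩ := hβ₁.exists_inverse
  have hsym : (Function.invFun f₂ ∘ f₁) ∘ w = w ∘ (β₂ ∘ β₁') := funext fun i => by
    have := congrFun h (β₁' i)
    simp only [comp_apply, hright i] at this
    simp only [comp_apply, this, leftInverse_invFun hf₂.1.1 _]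
  have := congrArg f₂ ((hf₂.invFun.comp hf₁).apply_eq_of_mem_fixPolygon (hβ₂.comp hβ₁') hsym hp)
  rwa [comp_apply, rightInverse_invFun hf₂.1.2] at this

variable (n) in
def polygonSimilarity : Setoid (Fin n → ℂ) where
  r v w := ∃ f β, IsSimilarity f ∧ IsDihedral n β ∧ v = f ∘ w ∘ β
  iseqv := by
    refine ⟨fun v => ⟨id, id, isSimilarity_id, IsDihedral.id, rfl⟩, ?_, ?_⟩
    · rintro v w ⟨f, β, hf, hβ, rfl⟩
      obtain ⟨β', hβ', -, hright⟩ := hβ.exists_inverse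
      exact ⟨Function.invFun f, β', hf.invFun, hβ', funext fun i => by
        simp [hright i, leftInverse_invFun hf.1.1 _]⟩
    · rintro u v w ⟨f, β, hf, hβ, rfl⟩ ⟨g, δ, hg, hδ, rfl⟩
      exact ⟨f ∘ g, δ ∘ β, hf.comp hg, hδ.comp hβ, rfl⟩

def normalForm (v : Fin n → ℂ) : Fin n → ℂ := (Quotient.mk (polygonSimilarity n) v).out

lemma polygonSimilarity_normalForm (v : Fin n → ℂ) : polygonSimilarity n v (normalForm v) :=
  (polygonSimilarity n).iseqv.symm (Quotient.exact (Quotient.mk (polygonSimilarity n) v).out_eq)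

lemma normalForm_eq {v w : Fin n → ℂ} (h : polygonSimilarity n v w) :
    normalForm v = normalForm w :=
  congrArg Quotient.out (Quotient.sound (s := polygonSimilarity n) h)

def frame (v : Fin n → ℂ) : ℂ → ℂ := (polygonSimilarity_normalForm v).choose

lemma frame_spec (v : Fin n → ℂ) : ∃ β, IsSimilarity (frame v) ∧ IsDihedral n β ∧
    v = frame v ∘ normalForm v ∘ β :=
  (polygonSimilarity_normalForm v).choose_spec

def transport (P : (Fin n → ℂ) → ℂ) (v : Fin n → ℂ) : ℂ := frame v (P (normalForm v))

variable {P : (Fin n → ℂ) → ℂ}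

lemma transport_eq (hP : ∀ w, P w ∈ FixPolygon n w) {v : Fin n → ℂ} {f : ℂ → ℂ}
    {β : Fin n → Fin n} (hf : IsSimilarity f) (hβ : IsDihedral n β)
    (hv : v = f ∘ normalForm v ∘ β) : transport P v = f (P (normalForm v)) := by
  obtain ⟨β₀, hf₀, hβ₀, hv₀⟩ := frame_spec v
  exact hf₀.eqOn_fixPolygon hf hβ₀ hβ (hv₀.symm.trans hv) (hP _)

lemma transport_comp_dihedral (hP : ∀ w, P w ∈ FixPolygon n w) (v : Fin n → ℂ)
    {α : Fin n → Fin n} (hα : IsDihedral n α) : transport P (v ∘ α) = transport P v := by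
  obtain ⟨β₀, hf₀, hβ₀, hv₀⟩ := frame_spec v
  have hnf : normalForm (v ∘ α) = normalForm v :=
    normalForm_eq ⟨id, α, isSimilarity_id, hα, rfl⟩
  rw [transport_eq hP hf₀ (hβ₀.comp hα) (by rw [hnf]; (conv_lhs => rw [hv₀]); rfl), hnf]
  rfl

lemma transport_similarity_comp (hP : ∀ w, P w ∈ FixPolygon n w) (v : Fin n → ℂ)
    {f : ℂ → ℂ} (hf : IsSimilarity f) : transport P (f ∘ v) = f (transport P v) := by
  obtain ⟨β₀, hf₀, hβ₀, hv₀⟩ := frame_spec v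
  have hnf : normalForm (f ∘ v) = normalForm v :=
    normalForm_eq ⟨f, id, hf, IsDihedral.id, rfl⟩
  rw [transport_eq hP (hf.comp hf₀) hβ₀ (by rw [hnf]; (conv_lhs => rw [hv₀]); rfl), hnf]
  rfl

lemma frame_polygonCentroid (v : Fin n → ℂ) :
    frame v (polygonCentroid n (normalForm v)) = polygonCentroid n v := by
  obtain ⟨β₀, hf₀, hβ₀, hv₀⟩ := frame_spec v
  conv_rhs => rw [hv₀, ← comp_assoc, polygonCentroid_comp _ hβ₀.bijective,
    hf₀.map_polygonCentroid]

lemma fixPolygon_eq_image_frame (v : Fin n → ℂ) :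
    FixPolygon n v = frame v '' FixPolygon n (normalForm v) := by
  obtain ⟨β₀, hf₀, hβ₀, hv₀⟩ := frame_spec v
  conv_lhs => rw [hv₀, fixPolygon_comp hf₀ hβ₀]

end Transport

section Selection

variable {n : ℕ}

open Classical in
def selectFixedPoint (u : ℂ) (w : Fin n → ℂ) : ℂ :=
  if FixPolygon n w = Set.univ then polygonCentroid n w + u
  else if h : ∃ p ∈ FixPolygon n w, p ≠ polygonCentroid n w then h.choose
  else polygonCentroid n w

lemma selectFixedPoint_of_eq_univ {w : Fin n → ℂ} (h : FixPolygon n w = Set.univ) (u : ℂ) :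
    selectFixedPoint u w = polygonCentroid n w + u :=
  if_pos h

lemma selectFixedPoint_of_ne_univ {w : Fin n → ℂ} (h : FixPolygon n w ≠ Set.univ) (u u' : ℂ) :
    selectFixedPoint u w = selectFixedPoint u' w := by
  simp only [selectFixedPoint, if_neg h]

variable [NeZero n]

lemma selectFixedPoint_mem (u : ℂ) (w : Fin n → ℂ) : selectFixedPoint u w ∈ FixPolygon n w := by
  unfold selectFixedPoint
  split_ifs with huniv hex
  · exact huniv ▸ Set.mem_univ _
  · exact hex.choose_spec.1
  · exact polygonCentroid_mem_fixPolygon w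

lemma selectFixedPoint_eq_polygonCentroid_iff {u : ℂ} (hu : u ≠ 0) (w : Fin n → ℂ) :
    selectFixedPoint u w = polygonCentroid n w ↔ ∃ x, FixPolygon n w = {x} := by
  have hsingleton : (∃ x, FixPolygon n w = {x}) ↔ ∀ p ∈ FixPolygon n w, p = polygonCentroid n w :=
    ⟨fun ⟨x, hx⟩ p hp => by
      have hc := polygonCentroid_mem_fixPolygon w
      rw [hx, Set.mem_singleton_iff] at hp hc
      exact hp.trans hc.symm,
    fun h => ⟨_, Set.eq_singleton_iff_unique_mem.2 ⟨polygonCentroid_mem_fixPolygon w, h⟩⟩⟩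
  rw [hsingleton]
  unfold selectFixedPoint
  split_ifs with huniv hex
  · simpa [huniv, hu] using ⟨polygonCentroid n w + 1, by simp⟩
  · simpa [hex.choose_spec.2] using hex
  · simpa using hex

lemma transport_selectFixedPoint_eq_polygonCentroid_iff {u : ℂ} (hu : u ≠ 0)
    (v : Fin n → ℂ) :
    transport (selectFixedPoint u) v = polygonCentroid n v ↔ ∃ x, FixPolygon n v = {x} := by
  obtain ⟨-, hf, -, -⟩ := frame_spec v
  rw [← frame_polygonCentroid, fixPolygon_eq_image_frame, hf.1.exists_image_eq_singleton_iff,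
    transport, hf.1.1.eq_iff, selectFixedPoint_eq_polygonCentroid_iff hu]

lemma not_collinear_transport_selectFixedPoint_iff (v : Fin n → ℂ) :
    ¬ Collinear ℝ ({polygonCentroid n v, transport (selectFixedPoint 1) v,
      transport (selectFixedPoint Complex.I) v} : Set ℂ) ↔ FixPolygon n v = Set.univ := by
  obtain ⟨-, hf, -, -⟩ := frame_spec v
  rw [fixPolygon_eq_image_frame, hf.1.image_eq_univ_iff, ← frame_polygonCentroid, transport,
    transport]
  refine ⟨fun hnc => by_contra fun h => hnc ?_, fun h => ?_⟩
  · rw [selectFixedPoint_of_ne_univ h 1 Complex.I, Set.pair_eq_singleton]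
    exact collinear_pair ℝ _ _
  · rw [selectFixedPoint_of_eq_univ h, selectFixedPoint_of_eq_univ h]
    exact hf.not_collinear _

end Selection

/-- Existence of the centers of rotational and axial asymmetry for `n`-gons:
`n`-gon centers `X` and `Y` such that (a) `X v` equals the centroid of `v` iff
`Fix v` is a single point, and (b) the centroid, `X v` and `Y v` are pairwise
distinct and not collinear iff `Fix v = ℂ`. -/
theorem stmt13 (n : ℕ) (hn : 3 ≤ n) :
    ∃ X Y : (Fin n → ℂ) → ℂ,
      (∀ (v : Fin n → ℂ) (α : Fin n → Fin n), IsDihedral n α → X (v ∘ α) = X v) ∧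
      (∀ (v : Fin n → ℂ) (f : ℂ → ℂ), IsSimilarity f → X (f ∘ v) = f (X v)) ∧
      (∀ (v : Fin n → ℂ) (α : Fin n → Fin n), IsDihedral n α → Y (v ∘ α) = Y v) ∧
      (∀ (v : Fin n → ℂ) (f : ℂ → ℂ), IsSimilarity f → Y (f ∘ v) = f (Y v)) ∧
      (∀ v : Fin n → ℂ,
        X v = (∑ i, v i) / (n : ℂ) ↔ ∃ x : ℂ, FixPolygon n v = {x}) ∧
      (∀ v : Fin n → ℂ,
        ((∑ i, v i) / (n : ℂ) ≠ X v ∧ (∑ i, v i) / (n : ℂ) ≠ Y v ∧ X v ≠ Y v ∧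
            ¬ Collinear ℝ ({(∑ i, v i) / (n : ℂ), X v, Y v} : Set ℂ)) ↔
          FixPolygon n v = Set.univ) := by
  have : NeZero n := ⟨by omega⟩
  have hsel := selectFixedPoint_mem (n := n)
  refine ⟨transport (selectFixedPoint 1), transport (selectFixedPoint Complex.I),
    fun v _ => transport_comp_dihedral (hsel _) v, fun v _ => transport_similarity_comp (hsel _) v,
    fun v _ => transport_comp_dihedral (hsel _) v, fun v _ => transport_similarity_comp (hsel _) v,
    fun v => transport_selectFixedPoint_eq_polygonCentroid_iff one_ne_zero v,
    fun v => ⟨fun h => (not_collinear_transport_selectFixedPoint_iff v).1 h.2.2.2, fun h => ?_⟩⟩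
  have hnc := (not_collinear_transport_selectFixedPoint_iff v).2 h
  exact ⟨ne₁₂_of_not_collinear hnc, ne₁₃_of_not_collinear hnc, ne₂₃_of_not_collinear hnc, hnc⟩
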